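/- For X uniformly distributed on (0, N/2] with N > 0 and any M ∈ (0, N/2], the probability that M/2 ≤ X ≤ M is strictly positive, hence the probability of correctly predicting which envelope is larger, namely 1/2 + (1/2)·P(M/2 ≤ X ≤ M), is strictly greater than 1/2. -/
import Mathlib


open MeasureTheory

/-- For X uniform on (0, N/2] and M ∈ (0, N/2], P(M/2 ≤ X ≤ M) > 0, hence the
success probability 1/2 + (1/2)·P(M/2 ≤ X ≤ M) exceeds 1/2. -/
theorem stmt1 (N M : ℝ) (hN : 0 < N) (hM : M ∈ Set.Ioc 0 (N / 2)) :
    0 < (volume {x ∈ Set.Ioc 0 (N / 2) | M / 2 ≤ x ∧ x ≤ M} /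
          volume (Set.Ioc 0 (N / 2))).toReal
    ∧ 1 / 2 < 1 / 2 + 1 / 2 *
        (volume {x ∈ Set.Ioc 0 (N / 2) | M / 2 ≤ x ∧ x ≤ M} /
          volume (Set.Ioc 0 (N / 2))).toReal := by
  obtain ⟨hM0, hMN⟩ := hM
  have hset : {x ∈ Set.Ioc 0 (N / 2) | M / 2 ≤ x ∧ x ≤ M} = Set.Icc (M / 2) M := by
    ext x
    simp only [Set.mem_setOf_eq, Set.mem_Ioc, Set.mem_Icc]
    constructor
    · rintro ⟨_, h⟩; exact h
    · rintro ⟨h1, h2⟩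
      exact ⟨⟨lt_of_lt_of_le (by linarith) h1, le_trans h2 hMN⟩, h1, h2⟩
  have h1 : volume {x ∈ Set.Ioc 0 (N / 2) | M / 2 ≤ x ∧ x ≤ M} = ENNReal.ofReal (M / 2) := by
    rw [hset, Real.volume_Icc]
    congr 1; ring
  have h2 : volume (Set.Ioc 0 (N / 2)) = ENNReal.ofReal (N / 2) := by
    rw [Real.volume_Ioc]; congr 1; ring
  have hpos : 0 < (volume {x ∈ Set.Ioc 0 (N / 2) | M / 2 ≤ x ∧ x ≤ M} /
      volume (Set.Ioc 0 (N / 2))).toReal := by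
    rw [h1, h2]
    rw [ENNReal.toReal_div]
    apply div_pos
    · rw [ENNReal.toReal_ofReal (by linarith)]; linarith
    · rw [ENNReal.toReal_ofReal (by linarith)]; linarith
  exact ⟨hpos, by linarith⟩
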